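/- arXiv:1010.4063 — 2 statements merged into one kernel-verified Lean document; each statement's English description precedes it below -/
import Mathlib

section
/- If r and d are positive integers with d ≤ r ≤ 2d − 2, and α satisfies 0 < α < d/(r+1), then the sequence p_n^{r,d}, n = 0, 1, 2, …, is strictly increasing. -/
/-!
Write `β = 1 - α` and `e = d - 1`. The variable `T = S_{n+r} + (n - S'_n)` has generating polynomial
`f_n = (β + αX)^(n+r) (α + βX)^n`, and `p_n = P(T ≥ n + d)`. Since `f_{n+1} = f_n g` with
`g = (β + αX)(α + βX) = (1 - 2α)² X + αβ (1 + X)²`, one gets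
`p_{n+1} - p_n = αβ (f_n[n+e] - f_n[n+e+1])`, so it suffices that the coefficients of `f_n` drop
from index `n + e` to `n + e + 1`.

Expanding `g^n` writes `f_n` as a nonnegative combination of `X^k (1 + X)^(2m) (β + αX)^r`
(`k + m = n`, with a positive weight at `k = 0`). Pairing the indices `e - t` and `e + 1 + t`,
the drop of `(1 + X)^(2m) (β + αX)^r` from `m + e` to `m + e + 1` is
`∑ t, (v (e - t) - v (e + 1 + t)) (C(2m, m+t) - C(2m, m+t+1))`, where `v` are the `Bin(r, α)`
weights. The central binomial coefficients decrease away from the middle, and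
`v (e + 1 + t) ≤ v (e - t)` (strictly for `t = 0`): the ratio `v (e + 1 + t) / v (e - t)` is the
product of the ratios `v (l + 1) / v l` for `e - t ≤ l ≤ e + t`, and when `r ≤ 2e + 1` each
symmetric pair of these is at most the square of the middle one, `α (r - e) / (β (e + 1))`, which
is `< 1` exactly when `α (r + 1) < d`.
-/

open Finset Filter Topology

/-- `p α r d n = P(S_{n+r} ≥ S'_n + d)` for independent binomials with success
probability `α`, given by its explicit combinatorial formula. -/
noncomputable def competeProb (α : ℝ) (r d n : ℕ) : ℝ :=
  ∑ i ∈ Finset.range (n + 1), ∑ j ∈ Finset.Icc (i + d) (n + r),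
    ((n + r).choose j : ℝ) * (n.choose i : ℝ) * α ^ (i + j) * (1 - α) ^ (2 * n + r - i - j)

open Polynomial

theorem Nat.choose_two_mul_add_succ_le (m t : ℕ) :
    (2 * m).choose (m + t + 1) ≤ (2 * m).choose (m + t) := by
  refine Nat.le_of_mul_le_mul_right ?_ (Nat.succ_pos (m + t))
  rw [Nat.choose_succ_right_eq]
  exact Nat.mul_le_mul_left _ (by omega)

theorem Nat.choose_two_mul_succ_lt (m : ℕ) : (2 * m).choose (m + 1) < (2 * m).choose m := by
  refine Nat.lt_of_mul_lt_mul_right (a := m + 1) ?_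
  rw [Nat.choose_succ_right_eq, show 2 * m - m = m by omega]
  exact Nat.mul_lt_mul_of_pos_left (Nat.lt_succ_self m) (Nat.choose_pos (by omega))

theorem Nat.choose_mul_choose_mul_sq_le {r e s : ℕ} (hr : r ≤ 2 * e + 1) (hs : s ≤ e) :
    r.choose (e + 1 + s) * r.choose (e + 1 - s) * (e + 1) ^ 2 ≤
      r.choose (e + s) * r.choose (e - s) * (r - e) ^ 2 := by
  have hup : r.choose (e + 1 + s) * (e + 1 + s) = r.choose (e + s) * (r - (e + s)) := by
    rw [← Nat.choose_succ_right_eq, add_right_comm]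
  have hdown : r.choose (e + 1 - s) * (e + 1 - s) = r.choose (e - s) * (r - (e - s)) := by
    rw [← Nat.choose_succ_right_eq, show e - s + 1 = e + 1 - s by omega]
  have key : (r - (e + s)) * (r - (e - s)) * (e + 1) ^ 2 ≤
      (r - e) ^ 2 * ((e + 1 + s) * (e + 1 - s)) := by
    rcases lt_or_ge r (e + s) with hlt | hle
    · simp [Nat.sub_eq_zero_of_le hlt.le]
    · have hA : r - e ≤ e + 1 := by omega
      zify [hle, hs, (by omega : e ≤ r), (by omega : e - s ≤ r), (by omega : s ≤ e + 1)] at hA ⊢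
      nlinarith [mul_le_mul_of_nonneg_left (pow_le_pow_left₀ (by omega) hA 2) (sq_nonneg (s : ℤ))]
  refine Nat.le_of_mul_le_mul_right ?_
    (Nat.mul_pos (by omega : 0 < e + 1 + s) (by omega : 0 < e + 1 - s))
  calc r.choose (e + 1 + s) * r.choose (e + 1 - s) * (e + 1) ^ 2 * ((e + 1 + s) * (e + 1 - s))
      = r.choose (e + 1 + s) * (e + 1 + s) * (r.choose (e + 1 - s) * (e + 1 - s)) *
          (e + 1) ^ 2 := by
        ring
    _ = r.choose (e + s) * r.choose (e - s) * ((r - (e + s)) * (r - (e - s)) * (e + 1) ^ 2) := by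
        rw [hup, hdown]
        ring
    _ ≤ r.choose (e + s) * r.choose (e - s) * ((r - e) ^ 2 * ((e + 1 + s) * (e + 1 - s))) := by
        gcongr
    _ = _ := by ring

theorem Nat.choose_mul_pow_le_choose_mul_pow {r e t : ℕ} (hr : r ≤ 2 * e + 1) (ht : t ≤ e) :
    r.choose (e + 1 + t) * (e + 1) ^ (2 * t + 1) ≤ r.choose (e - t) * (r - e) ^ (2 * t + 1) := by
  induction t with
  | zero => simpa using (Nat.choose_succ_right_eq r e).le
  | succ t ih =>
    rcases lt_or_ge r (e + 1 + (t + 1)) with hlt | hle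
    · simp [Nat.choose_eq_zero_of_lt hlt]
    have pair := Nat.choose_mul_choose_mul_sq_le hr ht
    rw [show e + 1 - (t + 1) = e - t by omega, show e + (t + 1) = e + 1 + t by omega] at pair
    refine Nat.le_of_mul_le_mul_left ?_ (Nat.choose_pos (by omega : e - t ≤ r))
    calc r.choose (e - t) * (r.choose (e + 1 + (t + 1)) * (e + 1) ^ (2 * (t + 1) + 1))
        = r.choose (e + 1 + (t + 1)) * r.choose (e - t) * (e + 1) ^ 2 * (e + 1) ^ (2 * t + 1) := by
          ring
      _ ≤ r.choose (e + 1 + t) * r.choose (e - (t + 1)) * (r - e) ^ 2 * (e + 1) ^ (2 * t + 1) := by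
          gcongr
      _ = r.choose (e - (t + 1)) * (r - e) ^ 2 *
            (r.choose (e + 1 + t) * (e + 1) ^ (2 * t + 1)) := by
          ring
      _ ≤ r.choose (e - (t + 1)) * (r - e) ^ 2 * (r.choose (e - t) * (r - e) ^ (2 * t + 1)) := by
          exact Nat.mul_le_mul_left _ (ih (by omega))
      _ = r.choose (e - t) * (r.choose (e - (t + 1)) * (r - e) ^ (2 * (t + 1) + 1)) := by
          ring

namespace Polynomial

section CommSemiring

variable {R : Type*} [CommSemiring R]

theorem coeff_C_add_C_mul_X_pow (a b : R) (N i : ℕ) :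
    ((C b + C a * X) ^ N).coeff i = N.choose i * a ^ i * b ^ (N - i) := by
  rw [add_comm, add_pow, finsetSum_coeff]
  simp only [mul_pow, ← C_pow, ← C_eq_natCast, mul_assoc, ← C_mul, coeff_C_mul, coeff_X_pow_mul',
    coeff_C, mul_ite, mul_zero]
  rw [sum_eq_single i (fun x _ hx => by grind) fun hi => by
    simp [Nat.choose_eq_zero_of_lt (by simpa using hi : N < i)]]
  simp only [le_refl, Nat.sub_self, if_true]
  ring

theorem natDegree_C_add_C_mul_X_pow_le (a b : R) (N : ℕ) :
    ((C b + C a * X) ^ N).natDegree ≤ N := by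
  simpa [add_comm] using natDegree_pow_le_of_le N (natDegree_linear_le (a := a) (b := b))

theorem coeff_mul_eq_sum_range (h Q : R[X]) {K : ℕ} (hh : h.natDegree < K) (s : ℕ) :
    (h * Q).coeff s = ∑ l ∈ range K, h.coeff l * if l ≤ s then Q.coeff (s - l) else 0 := by
  conv_lhs => rw [h.as_sum_range' K hh]
  simp only [Finset.sum_mul, finsetSum_coeff, ← C_mul_X_pow_eq_monomial, mul_assoc,
    coeff_C_mul, coeff_X_pow_mul']

theorem sum_coeff_mul_eq_sum_range (P Q : R[X]) {a b : ℕ} (hP : P.natDegree < a)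
    (hQ : Q.natDegree < b) (S : Finset ℕ) :
    ∑ s ∈ S, (P * Q).coeff s =
      ∑ j ∈ range a, ∑ i ∈ range b, if j + i ∈ S then P.coeff j * Q.coeff i else 0 := by
  conv_lhs => rw [P.as_sum_range' a hP, Q.as_sum_range' b hQ]
  simp only [Finset.sum_mul, Finset.mul_sum, monomial_mul_monomial, finsetSum_coeff,
    coeff_monomial]
  rw [sum_comm]
  simp_rw [sum_comm (s := S)]
  rw [sum_comm]
  simp only [sum_ite_eq]

theorem sum_range_coeff_X_pow_mul (p : R[X]) (m k : ℕ) :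
    ∑ s ∈ range (m + k), (X ^ k * p).coeff s = ∑ s ∈ range m, p.coeff s := by
  rw [add_comm, sum_range_add,
    sum_eq_zero fun s hs => by simp [coeff_X_pow_mul', (mem_range.1 hs).not_ge], zero_add]
  simp [add_comm k]

end CommSemiring

section CommRing

variable {R : Type*} [CommRing R]

theorem sum_range_coeff_mul_X_add_one_add_X_sq (p : R[X]) (a b : R) (m : ℕ) :
    ∑ s ∈ range (m + 2), (p * (C a * X + C b * (1 + X) ^ 2)).coeff s =
      (a + 4 * b) * ∑ s ∈ range (m + 1), p.coeff s + b * (p.coeff (m + 1) - p.coeff m) := by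
  have hexp : p * (C a * X + C b * (1 + X) ^ 2) =
      C b * (X ^ 0 * p) + C (a + 2 * b) * (X ^ 1 * p) + C b * (X ^ 2 * p) := by
    simp only [map_add, map_mul, map_ofNat]
    ring
  have h0 : ∑ s ∈ range (m + 2), (X ^ 0 * p).coeff s = ∑ s ∈ range (m + 2), p.coeff s :=
    sum_range_coeff_X_pow_mul p (m + 2) 0
  have h1 : ∑ s ∈ range (m + 2), (X ^ 1 * p).coeff s = ∑ s ∈ range (m + 1), p.coeff s :=
    sum_range_coeff_X_pow_mul p (m + 1) 1
  have h2 : ∑ s ∈ range (m + 2), (X ^ 2 * p).coeff s = ∑ s ∈ range m, p.coeff s :=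
    sum_range_coeff_X_pow_mul p m 2
  simp only [hexp, coeff_add, coeff_C_mul, sum_add_distrib, ← mul_sum, h0, h1, h2]
  rw [sum_range_succ _ (m + 1), sum_range_succ _ m]
  ring

theorem coeff_mul_one_add_X_pow_sub (h : R[X]) {e : ℕ} (hh : h.natDegree < 2 * e + 2) (m : ℕ) :
    (h * (1 + X) ^ (2 * m)).coeff (m + e) - (h * (1 + X) ^ (2 * m)).coeff (m + e + 1) =
      ∑ t ∈ range (e + 1), (h.coeff (e - t) - h.coeff (e + 1 + t)) *
        (((2 * m).choose (m + t) : R) - (2 * m).choose (m + t + 1)) := by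
  have split (F : ℕ → R) :
      ∑ l ∈ range (2 * e + 2), F l = ∑ t ∈ range (e + 1), (F (e - t) + F (e + 1 + t)) := by
    rw [show 2 * e + 2 = (e + 1) + (e + 1) by ring, sum_range_add, ← sum_range_reflect,
      sum_add_distrib, add_tsub_cancel_right]
  -- the coefficients of `(1 + X) ^ (2 * m)` are symmetric about `m`
  have centered (x y s : ℕ) (hs : s = m + y) (hxy : y ≤ x) :
      (if x ≤ s then ((2 * m).choose (s - x) : R) else 0) = (2 * m).choose (m + x - y) := by
    split_ifs
    · rw [Nat.choose_symm_of_eq_add]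
      omega
    · rw [Nat.choose_eq_zero_of_lt (by omega), Nat.cast_zero]
  rw [coeff_mul_eq_sum_range h _ hh, coeff_mul_eq_sum_range h _ hh, split, split,
    ← sum_sub_distrib]
  refine sum_congr rfl fun t ht => ?_
  have ht : t ≤ e := Nat.lt_succ_iff.1 (mem_range.1 ht)
  simp only [coeff_one_add_X_pow]
  rw [if_pos (show e - t ≤ m + e by omega), if_pos (show e - t ≤ m + e + 1 by omega),
    centered _ e (m + e) rfl (by omega), centered _ (e + 1) (m + e + 1) rfl (by omega),
    show m + e - (e - t) = m + t by omega, show m + (e + 1 + t) - e = m + t + 1 by omega,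
    show m + e + 1 - (e - t) = m + t + 1 by omega, show m + (e + 1 + t) - (e + 1) = m + t by omega]
  ring

end CommRing

section Ordered

variable {R : Type*} [CommRing R] [LinearOrder R] [IsStrictOrderedRing R]

theorem coeff_mul_one_add_X_pow_lt {h : R[X]} {e : ℕ} (hh : h.natDegree < 2 * e + 2)
    (hle : ∀ t ≤ e, h.coeff (e + 1 + t) ≤ h.coeff (e - t)) (hlt : h.coeff (e + 1) < h.coeff e)
    (m : ℕ) :
    (h * (1 + X) ^ (2 * m)).coeff (m + e + 1) < (h * (1 + X) ^ (2 * m)).coeff (m + e) := by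
  rw [← sub_pos, coeff_mul_one_add_X_pow_sub h hh]
  refine sum_pos' (fun t ht => mul_nonneg ?_ ?_) ⟨0, by simp, mul_pos ?_ ?_⟩
  · exact sub_nonneg.2 (hle t (Nat.lt_succ_iff.1 (mem_range.1 ht)))
  · exact sub_nonneg.2 (by exact_mod_cast Nat.choose_two_mul_add_succ_le m t)
  · simpa using hlt
  · simpa using Nat.choose_two_mul_succ_lt m

theorem coeff_X_add_one_add_X_sq_pow_mul_lt {a b : R} (ha : 0 ≤ a) (hb : 0 < b) {h : R[X]} {e : ℕ}
    (hW : ∀ m, (h * (1 + X) ^ (2 * m)).coeff (m + e + 1) < (h * (1 + X) ^ (2 * m)).coeff (m + e))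
    (n : ℕ) :
    ((C a * X + C b * (1 + X) ^ 2) ^ n * h).coeff (n + e + 1) <
      ((C a * X + C b * (1 + X) ^ 2) ^ n * h).coeff (n + e) := by
  have expand (j : ℕ) : ((C a * X + C b * (1 + X) ^ 2) ^ n * h).coeff (n + j) =
      ∑ k ∈ range (n + 1),
        a ^ k * b ^ (n - k) * n.choose k * (h * (1 + X) ^ (2 * (n - k))).coeff (n - k + j) := by
    rw [add_pow, sum_mul, finsetSum_coeff]
    refine sum_congr rfl fun k hk => ?_
    have hk : k ≤ n := Nat.lt_succ_iff.1 (mem_range.1 hk)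
    rw [show (C a * X) ^ k * (C b * (1 + X) ^ 2) ^ (n - k) * (n.choose k : R[X]) * h =
        C (a ^ k * b ^ (n - k) * n.choose k) * (X ^ k * (h * (1 + X) ^ (2 * (n - k)))) by
          simp only [mul_pow, pow_mul, map_mul, map_pow, map_natCast]; ring,
      coeff_C_mul, show n + j = n - k + j + k by omega, coeff_X_pow_mul]
  rw [add_assoc, expand, expand]
  refine sum_lt_sum (fun k _ => mul_le_mul_of_nonneg_left (hW (n - k)).le (by positivity))
    ⟨0, by simp, mul_lt_mul_of_pos_left (by simpa [add_assoc] using hW n) (by simp [hb])⟩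

end Ordered

end Polynomial

noncomputable def coinPoly (α : ℝ) : ℝ[X] := C (1 - α) + C α * X

theorem coeff_coinPoly_pow (α : ℝ) (N i : ℕ) :
    (coinPoly α ^ N).coeff i = N.choose i * α ^ i * (1 - α) ^ (N - i) :=
  coeff_C_add_C_mul_X_pow _ _ _ _

theorem natDegree_coinPoly_pow_le (α : ℝ) (N : ℕ) : (coinPoly α ^ N).natDegree ≤ N :=
  natDegree_C_add_C_mul_X_pow_le _ _ _

theorem coinPoly_mul_coinPoly_one_sub (α : ℝ) :
    coinPoly α * coinPoly (1 - α) = C ((1 - 2 * α) ^ 2) * X + C (α * (1 - α)) * (1 + X) ^ 2 := by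
  simp only [coinPoly, sub_sub_cancel, map_mul, map_pow, map_sub, map_one, map_ofNat]
  ring

theorem coeff_coinPoly_pow_succ_add_le {α : ℝ} (hα0 : 0 ≤ α) (hα1 : α ≤ 1) {r e t : ℕ}
    (hr : r ≤ 2 * e + 1) (hαr : α * (r - e) ≤ (1 - α) * (e + 1)) (ht : t ≤ e) :
    (coinPoly α ^ r).coeff (e + 1 + t) ≤ (coinPoly α ^ r).coeff (e - t) := by
  have hβ : 0 ≤ 1 - α := sub_nonneg.2 hα1
  rw [coeff_coinPoly_pow, coeff_coinPoly_pow]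
  rcases lt_or_ge r (e + 1 + t) with hlt | hle
  · rw [Nat.choose_eq_zero_of_lt hlt, Nat.cast_zero, zero_mul, zero_mul]
    positivity
  have hre : (0 : ℝ) ≤ r - e := sub_nonneg.2 (by exact_mod_cast (by omega : e ≤ r))
  have hchoose : (r.choose (e + 1 + t) : ℝ) * (e + 1) ^ (2 * t + 1) ≤
      r.choose (e - t) * (r - e) ^ (2 * t + 1) := by
    have := Nat.choose_mul_pow_le_choose_mul_pow hr ht
    rw [← Nat.cast_le (α := ℝ)] at this
    push_cast [Nat.cast_sub (by omega : e ≤ r)] at this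
    exact this
  have key : (r.choose (e + 1 + t) : ℝ) * α ^ (2 * t + 1) ≤
      r.choose (e - t) * (1 - α) ^ (2 * t + 1) := by
    refine le_of_mul_le_mul_right ?_ (by positivity : (0 : ℝ) < (e + 1) ^ (2 * t + 1))
    calc (r.choose (e + 1 + t) : ℝ) * α ^ (2 * t + 1) * (e + 1) ^ (2 * t + 1)
        = r.choose (e + 1 + t) * (e + 1) ^ (2 * t + 1) * α ^ (2 * t + 1) := by ring
      _ ≤ r.choose (e - t) * (r - e) ^ (2 * t + 1) * α ^ (2 * t + 1) := by gcongr
      _ = r.choose (e - t) * (α * (r - e)) ^ (2 * t + 1) := by rw [mul_pow]; ring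
      _ ≤ r.choose (e - t) * ((1 - α) * (e + 1)) ^ (2 * t + 1) := by gcongr
      _ = r.choose (e - t) * (1 - α) ^ (2 * t + 1) * (e + 1) ^ (2 * t + 1) := by rw [mul_pow]; ring
  have hα_split : α ^ (e + 1 + t) = α ^ (2 * t + 1) * α ^ (e - t) := by
    rw [← pow_add]; congr 1; omega
  have hβ_split :
      (1 - α) ^ (r - (e - t)) = (1 - α) ^ (2 * t + 1) * (1 - α) ^ (r - (e + 1 + t)) := by
    rw [← pow_add]; congr 1; omega
  rw [hα_split, hβ_split]
  calc (r.choose (e + 1 + t) : ℝ) * (α ^ (2 * t + 1) * α ^ (e - t)) * (1 - α) ^ (r - (e + 1 + t))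
      = (r.choose (e + 1 + t) * α ^ (2 * t + 1)) * (α ^ (e - t) * (1 - α) ^ (r - (e + 1 + t))) := by
        ring
    _ ≤ (r.choose (e - t) * (1 - α) ^ (2 * t + 1)) *
          (α ^ (e - t) * (1 - α) ^ (r - (e + 1 + t))) := by
        gcongr
    _ = _ := by ring

theorem coeff_coinPoly_pow_succ_lt {α : ℝ} (hα0 : 0 < α) (hα1 : α < 1) {r e : ℕ} (he : e < r)
    (hαr : α * (r - e) < (1 - α) * (e + 1)) :
    (coinPoly α ^ r).coeff (e + 1) < (coinPoly α ^ r).coeff e := by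
  have hβ : 0 < 1 - α := sub_pos.2 hα1
  have hchoose : (r.choose (e + 1) : ℝ) * (e + 1) = r.choose e * (r - e) := by
    have := congrArg (Nat.cast : ℕ → ℝ) (Nat.choose_succ_right_eq r e)
    push_cast [Nat.cast_sub he.le] at this
    exact this
  have hpos : 0 < (r.choose e : ℝ) * α ^ e * (1 - α) ^ (r - (e + 1)) := by
    have := Nat.choose_pos he.le
    positivity
  rw [coeff_coinPoly_pow, coeff_coinPoly_pow]
  refine lt_of_mul_lt_mul_right ?_ (by positivity : (0 : ℝ) ≤ e + 1)
  calc (r.choose (e + 1) : ℝ) * α ^ (e + 1) * (1 - α) ^ (r - (e + 1)) * (e + 1)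
      = r.choose (e + 1) * (e + 1) * α ^ e * (1 - α) ^ (r - (e + 1)) * α := by ring
    _ = r.choose e * α ^ e * (1 - α) ^ (r - (e + 1)) * (α * (r - e)) := by rw [hchoose]; ring
    _ < r.choose e * α ^ e * (1 - α) ^ (r - (e + 1)) * ((1 - α) * (e + 1)) := by gcongr
    _ = r.choose e * α ^ e * (1 - α) ^ (r - e) * (e + 1) := by
        rw [show r - e = r - (e + 1) + 1 by omega, pow_succ]; ring

/-- The generating polynomial of `S_{n+r} + (n - S'_n)`. -/
noncomputable def competePoly (α : ℝ) (r n : ℕ) : ℝ[X] :=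
  coinPoly α ^ (n + r) * coinPoly (1 - α) ^ n

theorem competePoly_eq (α : ℝ) (r n : ℕ) :
    competePoly α r n =
      (C ((1 - 2 * α) ^ 2) * X + C (α * (1 - α)) * (1 + X) ^ 2) ^ n * coinPoly α ^ r := by
  rw [competePoly, ← coinPoly_mul_coinPoly_one_sub, mul_pow, pow_add]
  ring

theorem competePoly_succ (α : ℝ) (r n : ℕ) :
    competePoly α r (n + 1) =
      competePoly α r n * (C ((1 - 2 * α) ^ 2) * X + C (α * (1 - α)) * (1 + X) ^ 2) := by
  rw [competePoly_eq, competePoly_eq, pow_succ]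
  ring

theorem natDegree_competePoly_lt (α : ℝ) (r n : ℕ) :
    (competePoly α r n).natDegree < 2 * n + r + 1 :=
  (natDegree_mul_le.trans (add_le_add (natDegree_coinPoly_pow_le _ _)
    (natDegree_coinPoly_pow_le _ _))).trans_lt (by omega)

theorem eval_one_competePoly (α : ℝ) (r n : ℕ) : (competePoly α r n).eval 1 = 1 := by
  simp [competePoly, coinPoly]

theorem competeProb_eq_sum_Ico (α : ℝ) (r d n : ℕ) :
    competeProb α r d n = ∑ s ∈ Ico (n + d) (2 * n + r + 1), (competePoly α r n).coeff s := by
  rw [competePoly, sum_coeff_mul_eq_sum_range _ _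
    (Nat.lt_succ_of_le (natDegree_coinPoly_pow_le α (n + r)))
    (Nat.lt_succ_of_le (natDegree_coinPoly_pow_le (1 - α) n)), sum_comm, ← sum_range_reflect,
    competeProb]
  refine sum_congr rfl fun i hi => ?_
  have hi : i ≤ n := Nat.lt_succ_iff.1 (mem_range.1 hi)
  rw [← sum_filter, Nat.succ_sub_one]
  refine sum_congr (by ext j; simp only [mem_Icc, mem_filter, mem_range, mem_Ico]; omega)
    fun j hj => ?_
  have hj : j ≤ n + r := Nat.lt_succ_iff.1 (mem_range.1 (mem_filter.1 hj).1)
  rw [coeff_coinPoly_pow, coeff_coinPoly_pow, sub_sub_cancel, Nat.choose_symm hi,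
    Nat.sub_sub_self hi, show 2 * n + r - i - j = (n + r - j) + (n - i) by omega, pow_add, pow_add]
  ring

theorem competeProb_eq_one_sub (α : ℝ) {r d n : ℕ} (hd : d ≤ n + r + 1) :
    competeProb α r d n = 1 - ∑ s ∈ range (n + d), (competePoly α r n).coeff s := by
  have htotal := eval_one_competePoly α r n
  rw [eval_eq_sum_range' (natDegree_competePoly_lt α r n)] at htotal
  simp only [one_pow, mul_one] at htotal
  rw [competeProb_eq_sum_Ico, ← htotal,
    ← sum_range_add_sum_Ico _ (by omega : n + d ≤ 2 * n + r + 1)]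
  ring

theorem competeProb_succ (α : ℝ) {r e n : ℕ} (he : e ≤ n + r) :
    competeProb α r (e + 1) (n + 1) = competeProb α r (e + 1) n +
      α * (1 - α) *
        ((competePoly α r n).coeff (n + e) - (competePoly α r n).coeff (n + e + 1)) := by
  rw [competeProb_eq_one_sub α (by omega), competeProb_eq_one_sub α (by omega), competePoly_succ,
    show n + 1 + (e + 1) = n + e + 2 by ring, sum_range_coeff_mul_X_add_one_add_X_sq,
    ← add_assoc n e 1]
  ring

theorem coeff_competePoly_lt {α : ℝ} (hα0 : 0 < α) (hα1 : α < 1) {r e : ℕ} (he : e < r)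
    (hr : r ≤ 2 * e + 1) (hαr : α * (r - e) < (1 - α) * (e + 1)) (n : ℕ) :
    (competePoly α r n).coeff (n + e + 1) < (competePoly α r n).coeff (n + e) := by
  rw [competePoly_eq]
  refine coeff_X_add_one_add_X_sq_pow_mul_lt (sq_nonneg _) (mul_pos hα0 (sub_pos.2 hα1))
    (fun m => ?_) n
  exact coeff_mul_one_add_X_pow_lt ((natDegree_coinPoly_pow_le α r).trans_lt (by omega))
    (fun t ht => coeff_coinPoly_pow_succ_add_le hα0.le hα1.le hr hαr.le ht)
    (coeff_coinPoly_pow_succ_lt hα0 hα1 he hαr) m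

theorem competeProb_increasing_small_alpha (r d : ℕ) (hd : 1 ≤ d) (hdr : d ≤ r) (hrd : r ≤ 2 * d - 2)
    (α : ℝ) (hα0 : 0 < α) (hα : α < (d : ℝ) / (r + 1)) :
    ∀ n : ℕ, competeProb α r d n < competeProb α r d (n + 1) := by
  intro n
  obtain ⟨e, rfl⟩ : ∃ e, d = e + 1 := ⟨d - 1, by omega⟩
  rw [lt_div_iff₀ (by positivity)] at hα
  push_cast at hα
  have her : (e : ℝ) + 1 ≤ r := by exact_mod_cast hdr
  have hα1 : α < 1 := by nlinarith
  have hΔ := coeff_competePoly_lt (r := r) (e := e) hα0 hα1 (by omega) (by omega) (by linarith) n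
  have hvar : 0 < α * (1 - α) := mul_pos hα0 (sub_pos.2 hα1)
  rw [competeProb_succ α (by omega)]
  linarith [mul_pos hvar (sub_pos.2 hΔ)]
end

section
/- For every α ∈ (0,1), all positive integers r, d, and every nonnegative integer n, p_{n+1}^{r,d} − p_n^{r,d} = −(4α(1−α)/π) ∫_0^1 Q_α(x)^n √(1 − x²) P̃_α^{r,d}(x) dx, where Q_α(x) = 1 − 4α(1−α)(1 − x²) and P̃_α^{r,d}(x) = Σ_{i=d}^{r} P(S_r = i) U_{2(i−d)}(x) − Σ_{i=0}^{d−1} P(S_r = i) U_{2(d−i−1)}(x), with U_k the Chebyshev polynomials of the second kind. -/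
open Finset Filter Topology

/-- The binomial probability `P(S_r = i) = C(r,i) α^i (1-α)^(r-i)`. -/
noncomputable def binomProb (α : ℝ) (r i : ℕ) : ℝ :=
  (r.choose i : ℝ) * α ^ i * (1 - α) ^ (r - i)

/-- `Q_α(x) = 1 - 4α(1-α)(1-x²)`. -/
noncomputable def Qa (α x : ℝ) : ℝ := 1 - 4 * α * (1 - α) * (1 - x ^ 2)

/-- `P̃_α^{r,d}(x) = Σ_{i=d}^r P(S_r = i) U_{2(i-d)}(x) - Σ_{i=0}^{d-1} P(S_r = i) U_{2(d-i-1)}(x)`,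
where `U_k` are the Chebyshev polynomials of the second kind. -/
noncomputable def Pt (α : ℝ) (r d : ℕ) (x : ℝ) : ℝ :=
  ∑ i ∈ Finset.Icc d r, binomProb α r i *
      (Polynomial.Chebyshev.U ℝ (2 * ((i : ℤ) - d))).eval x
    - ∑ i ∈ Finset.range d, binomProb α r i *
      (Polynomial.Chebyshev.U ℝ (2 * ((d : ℤ) - i - 1))).eval x

/-!
Write `p_n = P(D_n ≥ d)` with `D_n = S_{n+r} - S'_n`. One more trial on each side moves `D` by
`+1` or `-1`, each with probability `α(1-α)`, so
`p_{n+1} - p_n = α(1-α)(P(D_n = d-1) - P(D_n = d))`. Splitting `S_{n+r} = S_r + S''_n` averages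
this over `S_r` against the law `W` of `S''_n - S'_n`, which is symmetric. On the other side,
`x = cos θ` turns `√(1-x²) U_{2k}(x) dx` into `sin θ sin((2k+1)θ) dθ`, and
`Q_α(cos θ)^n = |1 - α + α e^{2iθ}|^{2n} = Σ_m W(m) cos 2mθ`, so the orthogonality of `cos 2mθ`
on `[0, π/2]` reads off `W(k) - W(k+1)`.
-/

open Real

lemma binomProb_eq_zero_of_lt (α : ℝ) {N i : ℕ} (h : N < i) : binomProb α N i = 0 := by
  simp [binomProb, Nat.choose_eq_zero_of_lt h]

lemma add_smul_pow_eq_sum_binomProb {A : Type*} [CommSemiring A] [Algebra ℝ A] (α : ℝ) (N : ℕ)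
    (z : A) : ((1 - α) • 1 + α • z) ^ N = ∑ i ∈ range (N + 1), binomProb α N i • z ^ i := by
  rw [add_comm, add_pow]
  refine sum_congr rfl fun i _ => ?_
  simp only [binomProb, Algebra.smul_def, map_mul, map_pow, map_natCast]
  ring

open Polynomial in
lemma binomProb_add (α : ℝ) (m n t : ℕ) :
    binomProb α (m + n) t = ∑ x ∈ range (m + 1), ∑ y ∈ range (n + 1),
      binomProb α m x * binomProb α n y * if x + y = t then 1 else 0 := by
  have hcoeff : ∀ N, binomProb α N t = (((1 - α) • 1 + α • X : ℝ[X]) ^ N).coeff t := by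
    intro N
    rw [add_smul_pow_eq_sum_binomProb, finsetSum_coeff]
    simp only [coeff_smul, coeff_X_pow, smul_eq_mul, mul_ite, mul_one, mul_zero, sum_ite_eq,
      mem_range]
    split_ifs with h
    · rfl
    · exact binomProb_eq_zero_of_lt α (by omega)
  rw [hcoeff, pow_add, add_smul_pow_eq_sum_binomProb, add_smul_pow_eq_sum_binomProb, sum_mul_sum,
    finsetSum_coeff]
  refine sum_congr rfl fun x _ => ?_
  rw [finsetSum_coeff]
  refine sum_congr rfl fun y _ => ?_
  rw [smul_mul_smul, ← pow_add, coeff_smul, coeff_X_pow, smul_eq_mul]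
  simp only [eq_comm]

noncomputable def binomExpect (α : ℝ) (N : ℕ) (f : ℕ → ℝ) : ℝ :=
  ∑ i ∈ range (N + 1), binomProb α N i * f i

section binomExpect

variable {α : ℝ}

lemma binomExpect_add_trials (m n : ℕ) (f : ℕ → ℝ) :
    binomExpect α (m + n) f = binomExpect α m fun x => binomExpect α n fun y => f (x + y) := by
  simp only [binomExpect, binomProb_add, sum_mul, mul_sum]
  rw [sum_comm]
  refine sum_congr rfl fun x hx => ?_
  rw [sum_comm]
  refine sum_congr rfl fun y hy => ?_
  simp only [mul_ite, mul_one, mul_zero, ite_mul, zero_mul, sum_ite_eq]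
  rw [if_pos (by simp only [mem_range] at hx hy ⊢; omega)]
  ring

lemma binomExpect_one (f : ℕ → ℝ) : binomExpect α 1 f = (1 - α) * f 0 + α * f 1 := by
  simp [binomExpect, binomProb, sum_range_succ]

lemma binomExpect_comm (m n : ℕ) (f : ℕ → ℕ → ℝ) :
    (binomExpect α m fun x => binomExpect α n fun y => f x y) =
      binomExpect α n fun y => binomExpect α m fun x => f x y := by
  simp only [binomExpect, mul_sum]
  rw [sum_comm]
  exact sum_congr rfl fun y _ => sum_congr rfl fun x _ => by ring

lemma binomExpect_add (N : ℕ) (f g : ℕ → ℝ) :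
    (binomExpect α N fun i => f i + g i) = binomExpect α N f + binomExpect α N g := by
  simp only [binomExpect, mul_add, sum_add_distrib]

lemma binomExpect_sub (N : ℕ) (f g : ℕ → ℝ) :
    (binomExpect α N fun i => f i - g i) = binomExpect α N f - binomExpect α N g := by
  simp only [binomExpect, mul_sub, sum_sub_distrib]

lemma binomExpect_const_mul (N : ℕ) (c : ℝ) (f : ℕ → ℝ) :
    (binomExpect α N fun i => c * f i) = c * binomExpect α N f := by
  simp only [binomExpect, mul_sum]
  exact sum_congr rfl fun i _ => by ring

lemma continuous_binomExpect {N : ℕ} {f : ℕ → ℝ → ℝ} (hf : ∀ i, Continuous (f i)) :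
    Continuous fun θ => binomExpect α N fun i => f i θ :=
  continuous_finsetSum _ fun i _ => continuous_const.mul (hf i)

lemma integral_binomExpect {N : ℕ} {f : ℕ → ℝ → ℝ} {a b : ℝ}
    (hf : ∀ i, IntervalIntegrable (f i) MeasureTheory.volume a b) :
    ∫ θ in a..b, (binomExpect α N fun i => f i θ) =
      binomExpect α N fun i => ∫ θ in a..b, f i θ := by
  simp only [binomExpect]
  rw [intervalIntegral.integral_finsetSum fun i _ => (hf i).const_mul _]
  exact sum_congr rfl fun i _ => intervalIntegral.integral_const_mul _ _

end binomExpect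

/-- `P(S_b - S'_a ≥ k)` for independent `S'_a ~ Bin(a, α)` and `S_b ~ Bin(b, α)`;
`binomDiffMass` is `P(S_b - S'_a = k)`. -/
noncomputable def binomDiffTail (α : ℝ) (a b : ℕ) (k : ℤ) : ℝ :=
  binomExpect α a fun i => binomExpect α b fun j => if (i : ℤ) + k ≤ j then 1 else 0

noncomputable def binomDiffMass (α : ℝ) (a b : ℕ) (k : ℤ) : ℝ :=
  binomExpect α a fun i => binomExpect α b fun j => if (i : ℤ) + k = j then 1 else 0

section binomDiff

variable {α : ℝ}

lemma binomDiffTail_succ_succ (a b : ℕ) (k : ℤ) :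
    binomDiffTail α (a + 1) (b + 1) k =
      binomExpect α a fun i => binomExpect α b fun j =>
        binomExpect α 1 fun y => binomExpect α 1 fun x =>
          if ((i + x : ℕ) : ℤ) + k ≤ (j + y : ℕ) then 1 else 0 := by
  rw [binomDiffTail, binomExpect_add_trials a 1]
  congr 1; ext i
  rw [binomExpect_comm, binomExpect_add_trials b 1]

lemma binomDiffTail_succ_succ_sub (a b : ℕ) (k : ℤ) :
    binomDiffTail α (a + 1) (b + 1) k - binomDiffTail α a b k =
      α * (1 - α) * (binomDiffMass α a b (k - 1) - binomDiffMass α a b k) := by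
  rw [binomDiffTail_succ_succ]
  simp only [binomDiffTail, binomDiffMass, binomExpect_one, ← binomExpect_sub,
    ← binomExpect_const_mul]
  congr 1; ext i; congr 1; ext j
  push_cast
  split_ifs <;> first | omega | ring

lemma binomDiffMass_add_trials (a r b : ℕ) (k : ℤ) :
    binomDiffMass α a (r + b) k = binomExpect α r fun s => binomDiffMass α a b (k - s) := by
  simp only [binomDiffMass, binomExpect_add_trials r b]
  rw [binomExpect_comm]
  congr 1; ext s; congr 1; ext i; congr 1; ext j
  push_cast
  congr 1
  exact propext (by omega)

lemma binomDiffMass_neg (a b : ℕ) (k : ℤ) : binomDiffMass α a b (-k) = binomDiffMass α b a k := by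
  rw [binomDiffMass, binomExpect_comm]
  congr 1; ext j; congr 1; ext i
  congr 1
  exact propext (by omega)

end binomDiff

lemma competeProb_eq_binomDiffTail (α : ℝ) (r d n : ℕ) :
    competeProb α r d n = binomDiffTail α n (n + r) d := by
  refine sum_congr rfl fun i hi => ?_
  have hi : i ≤ n := Nat.lt_succ_iff.mp (mem_range.mp hi)
  have hfilter :
      (range (n + r + 1)).filter (fun j : ℕ => (i : ℤ) + d ≤ j) = Icc (i + d) (n + r) := by
    ext j; simp only [mem_filter, mem_range, mem_Icc]; omega
  simp only [binomExpect, mul_ite, mul_one, mul_zero, mul_sum, ← sum_filter, hfilter]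
  refine sum_congr rfl fun j hj => ?_
  have hj : j ≤ n + r := (mem_Icc.mp hj).2
  rw [binomProb, binomProb, pow_add, show 2 * n + r - i - j = (n - i) + (n + r - j) by omega,
    pow_add]
  ring

lemma competeProb_succ_sub (α : ℝ) (r d n : ℕ) :
    competeProb α r d (n + 1) - competeProb α r d n =
      -(α * (1 - α)) * binomExpect α r fun s =>
        binomDiffMass α n n (s - d) - binomDiffMass α n n (s - d + 1) := by
  have hsymm (k : ℤ) : binomDiffMass α n n (-k) = binomDiffMass α n n k := binomDiffMass_neg n n k
  rw [competeProb_eq_binomDiffTail, competeProb_eq_binomDiffTail, add_right_comm,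
    binomDiffTail_succ_succ_sub, add_comm n r, binomDiffMass_add_trials, binomDiffMass_add_trials,
    binomExpect_sub]
  have h1 : (fun s : ℕ => binomDiffMass α n n ((d : ℤ) - 1 - s)) =
      fun s : ℕ => binomDiffMass α n n (s - d + 1) := by
    ext s; rw [← hsymm]; ring_nf
  have h2 : (fun s : ℕ => binomDiffMass α n n ((d : ℤ) - s)) =
      fun s : ℕ => binomDiffMass α n n (s - d) := by
    ext s; rw [← hsymm]; ring_nf
  rw [h1, h2]
  ring

lemma integral_cos_two_mul_int (m : ℤ) :
    ∫ θ in (0 : ℝ)..π / 2, cos (2 * m * θ) = if m = 0 then π / 2 else 0 := by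
  split_ifs with hm
  · simp [hm]
  · have h2m : (2 * m : ℝ) ≠ 0 := by exact_mod_cast mul_ne_zero two_ne_zero hm
    rw [intervalIntegral.integral_comp_mul_left _ h2m, integral_cos,
      show 2 * (m : ℝ) * (π / 2) = m * π by ring, sin_int_mul_pi]
    simp

lemma integral_cos_mul_cos_int (a k : ℤ) :
    ∫ θ in (0 : ℝ)..π / 2, cos (2 * a * θ) * cos (2 * k * θ) =
      π / 4 * ((if a + k = 0 then 1 else 0) + (if a - k = 0 then 1 else 0)) := by
  have hprod (θ : ℝ) : cos (2 * a * θ) * cos (2 * k * θ) =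
      (cos (2 * ((a + k : ℤ) : ℝ) * θ) + cos (2 * ((a - k : ℤ) : ℝ) * θ)) / 2 := by
    push_cast
    rw [show 2 * ((a : ℝ) + k) * θ = 2 * a * θ + 2 * k * θ by ring,
      show 2 * ((a : ℝ) - k) * θ = 2 * a * θ - 2 * k * θ by ring, cos_add, cos_sub]
    ring
  have hint (m : ℤ) : IntervalIntegrable (fun θ => cos (2 * (m : ℝ) * θ)) MeasureTheory.volume
      0 (π / 2) := by
    apply Continuous.intervalIntegrable; fun_prop
  simp only [hprod, intervalIntegral.integral_div,
    intervalIntegral.integral_add (hint _) (hint _), integral_cos_two_mul_int]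
  split_ifs <;> ring

lemma Qa_cos_eq_mul (α θ : ℝ) :
    (Qa α (cos θ) : ℂ) = ((1 - α) • 1 + α • Complex.exp (2 * θ * Complex.I)) *
      ((1 - α) • 1 + α • Complex.exp (-(2 * θ) * Complex.I)) := by
  have hprod : Complex.exp (2 * θ * Complex.I) * Complex.exp (-(2 * θ) * Complex.I) = 1 := by
    rw [← Complex.exp_add]; ring_nf; exact Complex.exp_zero
  have hsum : Complex.exp (2 * θ * Complex.I) + Complex.exp (-(2 * θ) * Complex.I) =
      2 * (2 * Complex.cos θ ^ 2 - 1) := by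
    rw [← Complex.cos_two_mul, Complex.two_cos]
  simp only [Qa, Complex.real_smul, mul_one]
  push_cast
  linear_combination (-α ^ 2) * hprod - α * (1 - α) * hsum

lemma Qa_cos_pow (α θ : ℝ) (n : ℕ) :
    Qa α (cos θ) ^ n =
      binomExpect α n fun i => binomExpect α n fun j => cos (2 * ((i : ℝ) - j) * θ) := by
  have hC : ((Qa α (cos θ) ^ n : ℝ) : ℂ) = ∑ i ∈ range (n + 1), ∑ j ∈ range (n + 1),
      ((binomProb α n i * binomProb α n j : ℝ) : ℂ) *
        Complex.exp ((2 * ((i : ℝ) - j) * θ : ℝ) * Complex.I) := by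
    rw [Complex.ofReal_pow, Qa_cos_eq_mul, mul_pow, add_smul_pow_eq_sum_binomProb,
      add_smul_pow_eq_sum_binomProb, sum_mul_sum]
    refine sum_congr rfl fun i _ => sum_congr rfl fun j _ => ?_
    rw [Complex.real_smul, Complex.real_smul, ← Complex.exp_nat_mul, ← Complex.exp_nat_mul,
      mul_mul_mul_comm, ← Complex.exp_add]
    push_cast
    ring_nf
  have hre := congrArg Complex.re hC
  simp only [Complex.ofReal_re, Complex.re_sum, Complex.re_ofReal_mul,
    Complex.exp_ofReal_mul_I_re] at hre
  simp only [hre, binomExpect, mul_sum, mul_assoc]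

lemma integral_Qa_cos_pow_mul_cos (α : ℝ) (n : ℕ) (k : ℤ) :
    ∫ θ in (0 : ℝ)..π / 2, Qa α (cos θ) ^ n * cos (2 * k * θ) =
      π / 2 * binomDiffMass α n n k := by
  have hcont (i j : ℕ) : Continuous fun θ => cos (2 * ((i : ℝ) - j) * θ) * cos (2 * k * θ) := by
    fun_prop
  calc ∫ θ in (0 : ℝ)..π / 2, Qa α (cos θ) ^ n * cos (2 * k * θ)
      = ∫ θ in (0 : ℝ)..π / 2, binomExpect α n fun i => binomExpect α n fun j =>
          cos (2 * ((i : ℝ) - j) * θ) * cos (2 * k * θ) := by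
        simp only [Qa_cos_pow, mul_comm _ (cos (2 * k * _)), ← binomExpect_const_mul]
    _ = binomExpect α n fun i => binomExpect α n fun j =>
          ∫ θ in (0 : ℝ)..π / 2, cos (2 * ((i : ℝ) - j) * θ) * cos (2 * k * θ) := by
        rw [integral_binomExpect fun i =>
          (continuous_binomExpect (hcont i)).intervalIntegrable _ _]
        congr 1; ext i
        exact integral_binomExpect fun j => (hcont i j).intervalIntegrable _ _
    _ = binomExpect α n fun i => binomExpect α n fun j =>
          π / 4 * ((if (i : ℤ) + k = j then 1 else 0) + (if (i : ℤ) + -k = j then 1 else 0)) := by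
        congr 1; ext i; congr 1; ext j
        have := integral_cos_mul_cos_int (i - j) k
        push_cast at this
        rw [this]
        congr 3 <;> exact propext (by omega)
    _ = π / 4 * (binomDiffMass α n n k + binomDiffMass α n n (-k)) := by
        simp only [binomDiffMass, binomExpect_const_mul, binomExpect_add]
    _ = π / 2 * binomDiffMass α n n k := by
        rw [binomDiffMass_neg]; ring

lemma integral_Qa_cos_pow_mul_sin_mul_sin (α : ℝ) (n : ℕ) (k : ℤ) :
    ∫ θ in (0 : ℝ)..π / 2, Qa α (cos θ) ^ n * (sin θ * sin ((2 * k + 1) * θ)) =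
      π / 4 * (binomDiffMass α n n k - binomDiffMass α n n (k + 1)) := by
  have hprod (θ : ℝ) : sin θ * sin ((2 * k + 1) * θ) =
      (cos (2 * (k : ℝ) * θ) - cos (2 * ((k + 1 : ℤ) : ℝ) * θ)) / 2 := by
    push_cast
    rw [show 2 * (k : ℝ) * θ = (2 * k + 1) * θ - θ by ring,
      show 2 * ((k : ℝ) + 1) * θ = (2 * k + 1) * θ + θ by ring, cos_sub, cos_add]
    ring
  have hint (m : ℤ) : IntervalIntegrable (fun θ => Qa α (cos θ) ^ n * cos (2 * (m : ℝ) * θ))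
      MeasureTheory.volume 0 (π / 2) := by
    apply Continuous.intervalIntegrable; unfold Qa; fun_prop
  simp only [hprod, mul_div_assoc', intervalIntegral.integral_div, mul_sub,
    intervalIntegral.integral_sub (hint _) (hint _), integral_Qa_cos_pow_mul_cos]
  ring

lemma sum_range_add_sum_Icc_of_eq_zero {M : Type*} [AddCommMonoid M] {f : ℕ → M} {d r : ℕ}
    (hf : ∀ i, r < i → f i = 0) :
    ∑ i ∈ range d, f i + ∑ i ∈ Icc d r, f i = ∑ i ∈ range (r + 1), f i := by
  rcases le_total d (r + 1) with h | h
  · rw [← Ico_add_one_right_eq_Icc, sum_range_add_sum_Ico _ h]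
  · rw [Icc_eq_empty (by omega), sum_empty, add_zero, ← sum_range_add_sum_Ico _ h,
      sum_eq_zero (s := Ico (r + 1) d) fun i hi => hf i (by simp only [mem_Ico] at hi; omega),
      add_zero]

open Polynomial.Chebyshev in
lemma Pt_eq_binomExpect (α : ℝ) (r d : ℕ) (x : ℝ) :
    Pt α r d x = binomExpect α r fun s => (U ℝ (2 * ((s : ℤ) - d))).eval x := by
  -- `U` is indexed by `ℤ`, with `U (-n) = -U (n - 2)`; this merges the two sums of `Pt`.
  have hU (i : ℕ) : U ℝ (2 * ((d : ℤ) - i - 1)) = -U ℝ (2 * ((i : ℤ) - d)) := by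
    rw [show 2 * ((i : ℤ) - d) = -(2 * ((d : ℤ) - i - 1) + 2) by ring, U_neg]
    ring_nf
  rw [Pt, binomExpect, ← sum_range_add_sum_Icc_of_eq_zero (d := d)
    fun i hi => by rw [binomProb_eq_zero_of_lt α hi, zero_mul]]
  simp only [hU, Polynomial.eval_neg, mul_neg, sum_neg_distrib]
  ring

lemma Pt_cos_mul_sin (α : ℝ) (r d : ℕ) (θ : ℝ) :
    Pt α r d (cos θ) * sin θ =
      binomExpect α r fun s => sin ((2 * (((s : ℤ) - d : ℤ) : ℝ) + 1) * θ) := by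
  rw [Pt_eq_binomExpect, binomExpect, sum_mul]
  refine sum_congr rfl fun s _ => ?_
  rw [mul_assoc, Polynomial.Chebyshev.U_real_cos]
  push_cast
  ring_nf

lemma integral_unitInterval_eq_integral_cos_mul_sin {g : ℝ → ℝ} (hg : Continuous g) :
    ∫ x in (0 : ℝ)..1, g x = ∫ θ in (0 : ℝ)..π / 2, g (cos θ) * sin θ := by
  have h := intervalIntegral.integral_comp_mul_deriv (a := 0) (b := π / 2)
    (fun θ _ => hasDerivAt_cos θ) continuous_sin.neg.continuousOn hg
  simp only [Function.comp_def, cos_zero, cos_pi_div_two, mul_neg,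
    intervalIntegral.integral_neg] at h
  rw [intervalIntegral.integral_symm, ← h, neg_neg]

lemma integral_Qa_pow_mul_sqrt_mul_Pt (α : ℝ) (r d n : ℕ) :
    ∫ x in (0 : ℝ)..1, Qa α x ^ n * √(1 - x ^ 2) * Pt α r d x =
      π / 4 * binomExpect α r fun s =>
        binomDiffMass α n n (s - d) - binomDiffMass α n n (s - d + 1) := by
  have hg : Continuous fun x => Qa α x ^ n * √(1 - x ^ 2) * Pt α r d x := by
    unfold Qa Pt; fun_prop
  have hcos : ∀ θ ∈ Set.uIcc 0 (π / 2),
      Qa α (cos θ) ^ n * √(1 - cos θ ^ 2) * Pt α r d (cos θ) * sin θ =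
        binomExpect α r fun s =>
          Qa α (cos θ) ^ n * (sin θ * sin ((2 * (((s : ℤ) - d : ℤ) : ℝ) + 1) * θ)) := by
    intro θ hθ
    rw [Set.uIcc_of_le (by positivity)] at hθ
    rw [← sin_eq_sqrt_one_sub_cos_sq hθ.1 (by linarith [hθ.2, pi_pos]), mul_assoc,
      Pt_cos_mul_sin, ← binomExpect_const_mul]
    simp only [mul_assoc]
  have hcont (s : ℕ) : Continuous fun θ =>
      Qa α (cos θ) ^ n * (sin θ * sin ((2 * (((s : ℤ) - d : ℤ) : ℝ) + 1) * θ)) := by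
    unfold Qa; fun_prop
  rw [integral_unitInterval_eq_integral_cos_mul_sin hg, intervalIntegral.integral_congr hcos,
    integral_binomExpect fun s => (hcont s).intervalIntegrable _ _, ← binomExpect_const_mul]
  simp only [integral_Qa_cos_pow_mul_sin_mul_sin]

theorem competeProb_diff_integral_repr_general (α : ℝ) (r d : ℕ) (n : ℕ) :
    competeProb α r d (n + 1) - competeProb α r d n =
      -(4 * α * (1 - α) / Real.pi) *
        ∫ x in (0 : ℝ)..1, Qa α x ^ n * Real.sqrt (1 - x ^ 2) * Pt α r d x := by
  rw [competeProb_succ_sub, integral_Qa_pow_mul_sqrt_mul_Pt]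
  field_simp

theorem competeProb_diff_integral_repr (α : ℝ) (hα : α ∈ Set.Ioo (0 : ℝ) 1)
    (r d : ℕ) (hr : 1 ≤ r) (hd : 1 ≤ d) (n : ℕ) :
    competeProb α r d (n + 1) - competeProb α r d n =
      -(4 * α * (1 - α) / Real.pi) *
        ∫ x in (0 : ℝ)..1, Qa α x ^ n * Real.sqrt (1 - x ^ 2) * Pt α r d x :=
  competeProb_diff_integral_repr_general α r d n
end
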